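/- Fix 0 < μ < 1 and let U_μ(x₁,x₂) = −μ/√((x₁+1)² + x₂²) − (1−μ)/√((x₁−1)² + x₂²), defined on ℝ² with the two points (−1,0) and (1,0) removed. Then U_μ has exactly one critical point, located at ( (2μ−1)/(1 + 2√(μ−μ²)), 0 ); its first coordinate x̄₁ satisfies −1 < x̄₁ < 1, and the critical value is U_μ(x̄₁, 0) = −1/2 − √(μ − μ²). -/

import Mathlib

/-- Potential of the planar Euler problem of two fixed centers with masses `μ` at
`(−1,0)` and `1−μ` at `(1,0)`. -/
noncomputable def eulerU (μ x₁ x₂ : ℝ) : ℝ :=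
  -μ / Real.sqrt ((x₁ + 1) ^ 2 + x₂ ^ 2) - (1 - μ) / Real.sqrt ((x₁ - 1) ^ 2 + x₂ ^ 2)

/-! The partial derivative in `x₂` is `x₂` times a positive factor, so every critical point lies
on the axis `x₂ = 0`. Outside the segment between the centers both attractions pull in the same
`x₁`-direction, so `∂₁U_μ ≠ 0` there. On the segment, `∂₁U_μ(x, 0) = μ/(1 + x)² - (1 - μ)/(1 - x)²`
vanishes iff `a (1 - x) = b (1 + x)` with `a = √μ`, `b = √(1 - μ)`, i.e. at `x̄₁ = (a - b)/(a + b)`;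
since `a² + b² = 1` this is `(2μ - 1)/(1 + 2ab)`, and `U_μ(x̄₁, 0) = -(a + b)²/2 = -1/2 - ab`. -/

open Real

lemma HasDerivAt.const_div_sqrt (c : ℝ) {q : ℝ → ℝ} {q' x : ℝ} (hq : HasDerivAt q q' x)
    (hx : 0 < q x) :
    HasDerivAt (fun t => c / √(q t)) (-(c * q' / (2 * √(q x) ^ 3))) x := by
  have hs : 0 < √(q x) := sqrt_pos.2 hx
  refine ((hasDerivAt_const x c).div (hq.sqrt hx.ne') hs.ne').congr_deriv ?_
  have h2 : √(q x) ^ 2 = q x := sq_sqrt hx.le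
  field_simp
  ring

lemma sq_add_sq_pos_of_ne {u v c : ℝ} (h : (u, v) ≠ (c, 0)) : 0 < (u - c) ^ 2 + v ^ 2 := by
  by_contra! hle
  have hu : u - c = 0 := by nlinarith [sq_nonneg (u - c), sq_nonneg v]
  have hv : v = 0 := by nlinarith [sq_nonneg (u - c), sq_nonneg v]
  exact h (by rw [sub_eq_zero.1 hu, hv])

lemma sub_div_add_mem_Ioo {a b : ℝ} (ha : 0 < a) (hb : 0 < b) :
    (a - b) / (a + b) ∈ Set.Ioo (-1) 1 := by
  rw [Set.mem_Ioo, lt_div_iff₀ (by positivity), div_lt_iff₀ (by positivity)]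
  constructor <;> linarith

lemma sqrt_self_sub_sq {μ : ℝ} (h0 : 0 ≤ μ) : √(μ - μ ^ 2) = √μ * √(1 - μ) := by
  rw [← sqrt_mul h0, mul_one_sub, sq]

lemma critical_abscissa_eq {μ : ℝ} (h0 : 0 ≤ μ) (h1 : μ ≤ 1) :
    (2 * μ - 1) / (1 + 2 * √(μ - μ ^ 2)) = (√μ - √(1 - μ)) / (√μ + √(1 - μ)) := by
  have ha2 : √μ ^ 2 = μ := sq_sqrt h0
  have hb2 : √(1 - μ) ^ 2 = 1 - μ := sq_sqrt (by linarith)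
  have hab : 0 < √μ + √(1 - μ) := by nlinarith [sqrt_nonneg μ, sqrt_nonneg (1 - μ)]
  rw [sqrt_self_sub_sq h0, div_eq_div_iff (by positivity) hab.ne']
  linear_combination (-2 * √(1 - μ)) * ha2 + (2 * √μ) * hb2

section
variable (μ : ℝ) {x₁ x₂ : ℝ}

lemma deriv_eulerU_fst (h₁ : 0 < (x₁ + 1) ^ 2 + x₂ ^ 2) (h₂ : 0 < (x₁ - 1) ^ 2 + x₂ ^ 2) :
    deriv (fun t => eulerU μ t x₂) x₁ =
      μ * (x₁ + 1) / √((x₁ + 1) ^ 2 + x₂ ^ 2) ^ 3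
        + (1 - μ) * (x₁ - 1) / √((x₁ - 1) ^ 2 + x₂ ^ 2) ^ 3 := by
  have hq₁ : HasDerivAt (fun t => (t + 1) ^ 2 + x₂ ^ 2) (2 * (x₁ + 1)) x₁ := by
    simpa using (((hasDerivAt_id x₁).add_const 1).pow 2).add_const (x₂ ^ 2)
  have hq₂ : HasDerivAt (fun t => (t - 1) ^ 2 + x₂ ^ 2) (2 * (x₁ - 1)) x₁ := by
    simpa using (((hasDerivAt_id x₁).sub_const 1).pow 2).add_const (x₂ ^ 2)
  exact ((hq₁.const_div_sqrt (-μ) h₁).sub (hq₂.const_div_sqrt (1 - μ) h₂)).deriv.trans (by ring)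

lemma deriv_eulerU_snd (h₁ : 0 < (x₁ + 1) ^ 2 + x₂ ^ 2) (h₂ : 0 < (x₁ - 1) ^ 2 + x₂ ^ 2) :
    deriv (fun t => eulerU μ x₁ t) x₂ =
      x₂ * (μ / √((x₁ + 1) ^ 2 + x₂ ^ 2) ^ 3 + (1 - μ) / √((x₁ - 1) ^ 2 + x₂ ^ 2) ^ 3) := by
  have hq : ∀ c : ℝ, HasDerivAt (fun t => c + t ^ 2) (2 * x₂) x₂ := fun c => by
    simpa [mul_comm] using ((hasDerivAt_id x₂).pow 2).const_add c
  exact ((hq _ |>.const_div_sqrt (-μ) h₁).sub (hq _ |>.const_div_sqrt (1 - μ) h₂)).deriv.trans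
    (by ring)

end

section
variable {μ : ℝ}

lemma deriv_eulerU_snd_eq_zero_iff (h0 : 0 < μ) (h1 : μ < 1) {x₁ x₂ : ℝ}
    (hr₁ : 0 < (x₁ + 1) ^ 2 + x₂ ^ 2) (hr₂ : 0 < (x₁ - 1) ^ 2 + x₂ ^ 2) :
    deriv (fun t => eulerU μ x₁ t) x₂ = 0 ↔ x₂ = 0 := by
  have : 0 < 1 - μ := by linarith
  rw [deriv_eulerU_snd μ hr₁ hr₂, mul_eq_zero, or_iff_left (by positivity)]

lemma deriv_eulerU_fst_pos (h0 : 0 < μ) (h1 : μ < 1) {x₁ x₂ : ℝ} (hx : 1 ≤ x₁)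
    (hr₂ : 0 < (x₁ - 1) ^ 2 + x₂ ^ 2) :
    0 < deriv (fun t => eulerU μ t x₂) x₁ := by
  have hr₁ : 0 < (x₁ + 1) ^ 2 + x₂ ^ 2 := by nlinarith [sq_nonneg x₂]
  rw [deriv_eulerU_fst μ hr₁ hr₂]
  have : 0 < μ * (x₁ + 1) / √((x₁ + 1) ^ 2 + x₂ ^ 2) ^ 3 :=
    div_pos (mul_pos h0 (by linarith)) (pow_pos (sqrt_pos.2 hr₁) 3)
  have : 0 ≤ (1 - μ) * (x₁ - 1) / √((x₁ - 1) ^ 2 + x₂ ^ 2) ^ 3 :=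
    div_nonneg (mul_nonneg (by linarith) (by linarith)) (by positivity)
  linarith

lemma deriv_eulerU_fst_neg (h0 : 0 < μ) (h1 : μ < 1) {x₁ x₂ : ℝ} (hx : x₁ ≤ -1)
    (hr₁ : 0 < (x₁ + 1) ^ 2 + x₂ ^ 2) :
    deriv (fun t => eulerU μ t x₂) x₁ < 0 := by
  have hr₂ : 0 < (x₁ - 1) ^ 2 + x₂ ^ 2 := by nlinarith [sq_nonneg x₂]
  rw [deriv_eulerU_fst μ hr₁ hr₂]
  have : μ * (x₁ + 1) / √((x₁ + 1) ^ 2 + x₂ ^ 2) ^ 3 ≤ 0 :=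
    div_nonpos_of_nonpos_of_nonneg (mul_nonpos_of_nonneg_of_nonpos h0.le (by linarith))
      (by positivity)
  have : (1 - μ) * (x₁ - 1) / √((x₁ - 1) ^ 2 + x₂ ^ 2) ^ 3 < 0 :=
    div_neg_of_neg_of_pos (mul_neg_of_pos_of_neg (by linarith) (by linarith))
      (pow_pos (sqrt_pos.2 hr₂) 3)
  linarith

lemma sqrt_sq_add_zero_sq_of_mem_Ioo {x : ℝ} (hx : x ∈ Set.Ioo (-1) 1) :
    √((x + 1) ^ 2 + 0 ^ 2) = x + 1 ∧ √((x - 1) ^ 2 + 0 ^ 2) = 1 - x := by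
  constructor
  · rw [zero_pow two_ne_zero, add_zero, sqrt_sq (by linarith [hx.1])]
  · rw [zero_pow two_ne_zero, add_zero, ← neg_sub, neg_sq, sqrt_sq (by linarith [hx.2])]

lemma eulerU_axis {x : ℝ} (hx : x ∈ Set.Ioo (-1) 1) :
    eulerU μ x 0 = -μ / (x + 1) - (1 - μ) / (1 - x) := by
  rw [eulerU, (sqrt_sq_add_zero_sq_of_mem_Ioo hx).1, (sqrt_sq_add_zero_sq_of_mem_Ioo hx).2]

lemma deriv_eulerU_fst_axis {x : ℝ} (hx : x ∈ Set.Ioo (-1) 1) :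
    deriv (fun t => eulerU μ t 0) x = μ / (x + 1) ^ 2 - (1 - μ) / (1 - x) ^ 2 := by
  have hp : 0 < x + 1 := by linarith [hx.1]
  have hm : 0 < 1 - x := by linarith [hx.2]
  rw [deriv_eulerU_fst μ (by positivity) (by nlinarith), (sqrt_sq_add_zero_sq_of_mem_Ioo hx).1,
    (sqrt_sq_add_zero_sq_of_mem_Ioo hx).2]
  field_simp
  ring

lemma deriv_eulerU_fst_axis_eq_zero_iff (h0 : 0 < μ) (h1 : μ < 1) {x : ℝ}
    (hx : x ∈ Set.Ioo (-1) 1) :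
    deriv (fun t => eulerU μ t 0) x = 0 ↔ x = (√μ - √(1 - μ)) / (√μ + √(1 - μ)) := by
  have hp : 0 < x + 1 := by linarith [hx.1]
  have hm : 0 < 1 - x := by linarith [hx.2]
  have ha : 0 < √μ := sqrt_pos.2 h0
  have hb : 0 < √(1 - μ) := sqrt_pos.2 (by linarith)
  have hsq : (√μ * (1 - x)) ^ 2 = (√(1 - μ) * (x + 1)) ^ 2 ↔
      μ * (1 - x) ^ 2 = (1 - μ) * (x + 1) ^ 2 := by
    rw [mul_pow, mul_pow, sq_sqrt h0.le, sq_sqrt (by linarith)]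
  rw [deriv_eulerU_fst_axis hx, sub_eq_zero, div_eq_div_iff (by positivity) (by positivity), ← hsq,
    sq_eq_sq₀ (by positivity) (by positivity), eq_div_iff (by positivity)]
  constructor <;> intro h <;> linarith

lemma eulerU_critical_value (h0 : 0 < μ) (h1 : μ < 1) :
    eulerU μ ((√μ - √(1 - μ)) / (√μ + √(1 - μ))) 0 = -(1 / 2) - √μ * √(1 - μ) := by
  have ha : 0 < √μ := sqrt_pos.2 h0
  have hb : 0 < √(1 - μ) := sqrt_pos.2 (by linarith)
  have ha2 : √μ ^ 2 = μ := sq_sqrt h0.le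
  have hb2 : √(1 - μ) ^ 2 = 1 - μ := sq_sqrt (by linarith)
  rw [eulerU_axis (sub_div_add_mem_Ioo ha hb)]
  have hp : (√μ - √(1 - μ)) / (√μ + √(1 - μ)) + 1 = 2 * √μ / (√μ + √(1 - μ)) := by
    field_simp; ring
  have hm : 1 - (√μ - √(1 - μ)) / (√μ + √(1 - μ)) = 2 * √(1 - μ) / (√μ + √(1 - μ)) := by
    field_simp; ring
  rw [hp, hm]
  field_simp
  linear_combination √(1 - μ) ^ 2 * ha2 + √μ ^ 2 * hb2

lemma deriv_eulerU_eq_zero_iff (h0 : 0 < μ) (h1 : μ < 1) {x₁ x₂ : ℝ}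
    (hE : (x₁, x₂) ≠ (-1, 0)) (hS : (x₁, x₂) ≠ (1, 0)) :
    deriv (fun t => eulerU μ t x₂) x₁ = 0 ∧ deriv (fun t => eulerU μ x₁ t) x₂ = 0 ↔
      x₁ = (√μ - √(1 - μ)) / (√μ + √(1 - μ)) ∧ x₂ = 0 := by
  have hr₁ : 0 < (x₁ + 1) ^ 2 + x₂ ^ 2 := by simpa using sq_add_sq_pos_of_ne hE
  have hr₂ : 0 < (x₁ - 1) ^ 2 + x₂ ^ 2 := sq_add_sq_pos_of_ne hS
  rw [deriv_eulerU_snd_eq_zero_iff h0 h1 hr₁ hr₂]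
  constructor
  · rintro ⟨hd, rfl⟩
    have hx : x₁ ∈ Set.Ioo (-1) 1 :=
      ⟨lt_of_not_ge fun h => (deriv_eulerU_fst_neg h0 h1 h hr₁).ne hd,
        lt_of_not_ge fun h => (deriv_eulerU_fst_pos h0 h1 h hr₂).ne' hd⟩
    exact ⟨(deriv_eulerU_fst_axis_eq_zero_iff h0 h1 hx).1 hd, rfl⟩
  · rintro ⟨rfl, rfl⟩
    have hx := sub_div_add_mem_Ioo (sqrt_pos.2 h0) (sqrt_pos.2 (sub_pos.2 h1))
    exact ⟨(deriv_eulerU_fst_axis_eq_zero_iff h0 h1 hx).2 rfl, rfl⟩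

end

theorem eulerTwoCenters_critical_point (μ : ℝ) (h0 : 0 < μ) (h1 : μ < 1) :
    {p : ℝ × ℝ | p ≠ (-1, 0) ∧ p ≠ (1, 0) ∧
        deriv (fun t => eulerU μ t p.2) p.1 = 0 ∧ deriv (fun t => eulerU μ p.1 t) p.2 = 0}
      = {((2 * μ - 1) / (1 + 2 * Real.sqrt (μ - μ ^ 2)), 0)} ∧
    -1 < (2 * μ - 1) / (1 + 2 * Real.sqrt (μ - μ ^ 2)) ∧
    (2 * μ - 1) / (1 + 2 * Real.sqrt (μ - μ ^ 2)) < 1 ∧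
    eulerU μ ((2 * μ - 1) / (1 + 2 * Real.sqrt (μ - μ ^ 2))) 0
      = -(1 / 2) - Real.sqrt (μ - μ ^ 2) := by
  rw [critical_abscissa_eq h0.le h1.le, sqrt_self_sub_sq h0.le]
  set X := (√μ - √(1 - μ)) / (√μ + √(1 - μ))
  have hX : X ∈ Set.Ioo (-1) 1 := sub_div_add_mem_Ioo (sqrt_pos.2 h0) (sqrt_pos.2 (sub_pos.2 h1))
  refine ⟨?_, hX.1, hX.2, eulerU_critical_value h0 h1⟩
  ext ⟨x₁, x₂⟩
  simp only [Set.mem_ofPred_eq, Set.mem_singleton_iff, Prod.mk.injEq]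
  constructor
  · rintro ⟨hE, hS, hd⟩
    exact (deriv_eulerU_eq_zero_iff h0 h1 hE hS).1 hd
  · rintro ⟨rfl, rfl⟩
    have hE : (X, (0 : ℝ)) ≠ (-1, 0) := fun h => hX.1.ne' (Prod.ext_iff.1 h).1
    have hS : (X, (0 : ℝ)) ≠ (1, 0) := fun h => hX.2.ne (Prod.ext_iff.1 h).1
    exact ⟨hE, hS, (deriv_eulerU_eq_zero_iff h0 h1 hE hS).2 ⟨rfl, rfl⟩⟩
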